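/- Let φ : ℂ[X,Y,Z,W] → ℂ[x,y,z] be the ℂ-algebra homomorphism sending X ↦ y²+xz, Y ↦ x⁵+yz+xy², Z ↦ x⁶+y³+z², W ↦ x⁷+x⁴z+xz²+y²z (the components of f₁). Then the Krull dimension of the quotient ring ℂ[X,Y,Z,W]/ker φ equals 3; i.e., the image of f₁ is a three-dimensional variety (a hypersurface) in ℂ⁴. -/

import Mathlib

/-!
The four components of `f₁` are algebraically dependent, because `ℂ[x,y,z]` has transcendence
degree `3`; so `ker φ` contains a nonzero element of the four-dimensional domain `ℂ[X,Y,Z,W]`, and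
the quotient has dimension at most `3`. Conversely, the primes `0 ⊂ (x) ⊂ (x,y) ⊂ (x,y,z)` of
`ℂ[x,y,z]` pull back along `φ` to a chain of primes containing `ker φ`; it is strict because
`W² - XY²`, `X` and `Z` separate consecutive members.
-/

open MvPolynomial

/-- The pullback homomorphism `φ = f₁* : ℂ[X,Y,Z,W] → ℂ[x,y,z]` of the map-germ
`f₁(x,y,z) = (y²+xz, x⁵+yz+xy², x⁶+y³+z², x⁷+x⁴z+xz²+y²z)`
(with `x = X 0`, `y = X 1`, `z = X 2` in the source ring). -/
noncomputable def φ : MvPolynomial (Fin 4) ℂ →ₐ[ℂ] MvPolynomial (Fin 3) ℂ :=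
  aeval
    ![X 1 ^ 2 + X 0 * X 2,
      X 0 ^ 5 + X 1 * X 2 + X 0 * X 1 ^ 2,
      X 0 ^ 6 + X 1 ^ 3 + X 2 ^ 2,
      X 0 ^ 7 + X 0 ^ 4 * X 2 + X 0 * X 2 ^ 2 + X 1 ^ 2 * X 2]

universe u

open Cardinal in
theorem MvPolynomial.ker_ne_bot_of_cardinalMk_lt {K : Type*} {σ τ : Type u} [Field K]
    (f : MvPolynomial σ K →ₐ[K] MvPolynomial τ K) (h : #τ < #σ) : RingHom.ker f ≠ ⊥ :=
  fun hker => by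
  have htrdeg := trdeg_le_of_injective f ((RingHom.injective_iff_ker_eq_bot f).mpr hker)
  simp only [MvPolynomial.trdeg_of_isDomain] at htrdeg
  exact (htrdeg.trans_lt (lift_lt.mpr h)).false

theorem ringKrullDim_quotient_add_one_le {R : Type*} [CommRing R] [IsDomain R] {I : Ideal R}
    (hI : I ≠ ⊥) : ringKrullDim (R ⧸ I) + 1 ≤ ringKrullDim R := by
  obtain ⟨r, hrI, hr⟩ := Submodule.exists_mem_ne_zero_of_ne_bot hI
  exact ringKrullDim_succ_le_of_surjective _ Ideal.Quotient.mk_surjective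
    (mem_nonZeroDivisors_of_ne_zero hr) (Ideal.Quotient.eq_zero_iff_mem.mpr hrI)

theorem natCast_le_ringKrullDim_quotient_of_ker_lt {R D F : Type*} [CommRing R] [CommRing D]
    [IsDomain D] [FunLike F R D] [RingHomClass F R D] (I : Ideal R) {n : ℕ} (g : Fin (n + 1) → F)
    (hI : ∀ i, I ≤ RingHom.ker (g i))
    (hg : ∀ i : Fin n, RingHom.ker (g i.castSucc) < RingHom.ker (g i.succ)) :
    n ≤ ringKrullDim (R ⧸ I) := by
  rw [ringKrullDim_quotient]
  exact Order.LTSeries.length_le_krullDim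
    ⟨n, fun i => ⟨⟨RingHom.ker (g i), RingHom.ker_isPrime _⟩, hI i⟩, fun i => show _ < _ from hg i⟩

namespace MvPolynomial

variable {R : Type*} [CommSemiring R] {n : ℕ}

noncomputable def zeroFirstVars (k : ℕ) : MvPolynomial (Fin n) R →ₐ[R] MvPolynomial (Fin n) R :=
  aeval fun j => if (j : ℕ) < k then 0 else X j

theorem zeroFirstVars_comp_of_le {k l : ℕ} (hkl : k ≤ l) :
    (zeroFirstVars l).comp (zeroFirstVars k) =
      (zeroFirstVars l : MvPolynomial (Fin n) R →ₐ[R] _) := by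
  refine algHom_ext fun j => ?_
  by_cases hj : (j : ℕ) < k
  · simp [zeroFirstVars, hj, hj.trans_le hkl]
  · simp [zeroFirstVars, hj]

theorem ker_zeroFirstVars_comp_le_of_le {A : Type*} [Semiring A] [Algebra R A] {k l : ℕ}
    (hkl : k ≤ l) (f : A →ₐ[R] MvPolynomial (Fin n) R) :
    RingHom.ker ((zeroFirstVars k).comp f) ≤ RingHom.ker ((zeroFirstVars l).comp f) := by
  intro a ha
  rw [RingHom.mem_ker] at ha ⊢
  rw [← zeroFirstVars_comp_of_le hkl, AlgHom.comp_assoc, AlgHom.comp_apply, ha, map_zero]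

end MvPolynomial

theorem ker_zeroFirstVars_comp_φ_lt (i : Fin 3) :
    RingHom.ker ((zeroFirstVars i).comp φ) < RingHom.ker ((zeroFirstVars (i + 1)).comp φ) := by
  refine SetLike.lt_iff_le_and_exists.mpr ⟨ker_zeroFirstVars_comp_le_of_le (Nat.le_succ i) φ,
    ![X 3 ^ 2 - X 0 * X 1 ^ 2, X 0, X 2] i, ?_, fun h => ?_⟩
  · fin_cases i
    · simp [φ, zeroFirstVars]
      ring
    all_goals simp [φ, zeroFirstVars]
  · have heval := congrArg (eval fun _ => (1 : ℂ)) (RingHom.mem_ker.mp h)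
    fin_cases i <;> simp [φ, zeroFirstVars] at heval
    norm_num at heval

/-- the Krull dimension of `ℂ[X,Y,Z,W]/ker φ` equals `3`; i.e. the image of
`f₁` is a three-dimensional variety (a hypersurface) in `ℂ⁴`. -/
theorem image_f1_dim_three :
    ringKrullDim (MvPolynomial (Fin 4) ℂ ⧸ RingHom.ker φ) = 3 := by
  have hker : RingHom.ker φ ≠ ⊥ := ker_ne_bot_of_cardinalMk_lt φ (by norm_num)
  refine le_antisymm ?_ ?_
  · have hdim := ringKrullDim_quotient_add_one_le hker
    rw [MvPolynomial.ringKrullDim_of_isNoetherianRing, ringKrullDim_eq_zero_of_field] at hdim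
    exact ENat.WithBot.add_le_add_one_right_iff.mp (hdim.trans_eq (by norm_num))
  · refine natCast_le_ringKrullDim_quotient_of_ker_lt (RingHom.ker φ)
      (fun i : Fin 4 => (zeroFirstVars i).comp φ) (fun i a ha => ?_) ker_zeroFirstVars_comp_φ_lt
    rw [RingHom.mem_ker] at ha ⊢
    rw [AlgHom.comp_apply, ha, map_zero]
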